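/- arXiv:1603.03012 — 3 statements merged into one kernel-verified Lean document; each statement's English description precedes it below -/
import Mathlib

section
/- Deterministic KVA theorem, part (ii): with KVA the solution of the nonlinear KVA equation and EC = max(ES, KVA), for every continuous C : [0,T] → ℝ satisfying C(t) ≥ max(ES(t), K(C)(t)) for all t (admissibility), it holds that KVA(t) ≤ K(C)(t) and EC(t) ≤ C(t) for all t ∈ [0,T]. That is, EC is the minimal admissible economic capital process and KVA the minimal associated cost of capital. -/
open MeasureTheory intervalIntegral Set

/-- Deterministic KVA theorem, part (ii): `EC = max(ES, KVA)` is the minimal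
admissible economic capital process and `KVA` the minimal associated cost of capital. -/
theorem kva_minimality (T h : ℝ) (hT : 0 < T) (hh : 0 ≤ h) (r ES : ℝ → ℝ)
    (hr : ContinuousOn r (Set.Icc 0 T)) (hES : ContinuousOn ES (Set.Icc 0 T))
    (KVA : ℝ → ℝ) (hKVAc : ContinuousOn KVA (Set.Icc 0 T))
    (hKVA : ∀ t ∈ Set.Icc (0 : ℝ) T,
      KVA t = ∫ s in t..T, (h * max (ES s) (KVA s) - (r s + h) * KVA s))
    (C : ℝ → ℝ) (hCc : ContinuousOn C (Set.Icc 0 T))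
    (KC : ℝ → ℝ) (hKCc : ContinuousOn KC (Set.Icc 0 T))
    (hKC : ∀ t ∈ Set.Icc (0 : ℝ) T,
      KC t = ∫ s in t..T, (h * C s - (r s + h) * KC s))
    (hadm : ∀ t ∈ Set.Icc (0 : ℝ) T, max (ES t) (KC t) ≤ C t) :
    ∀ t ∈ Set.Icc (0 : ℝ) T, KVA t ≤ KC t ∧ max (ES t) (KVA t) ≤ C t := by
  -- the difference function and the integrand of its integral equation
  set G : ℝ → ℝ := fun s =>
    (h * C s - (r s + h) * KC s) - (h * max (ES s) (KVA s) - (r s + h) * KVA s) with hGdef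
  set D : ℝ → ℝ := fun s => KC s - KVA s with hDdef
  have hGc : ContinuousOn G (Set.Icc 0 T) := by
    apply ContinuousOn.sub
    · exact (continuousOn_const.mul hCc).sub ((hr.add continuousOn_const).mul hKCc)
    · exact (continuousOn_const.mul (hES.sup hKVAc)).sub
        ((hr.add continuousOn_const).mul hKVAc)
  have hDc : ContinuousOn D (Set.Icc 0 T) := hKCc.sub hKVAc
  have hsub : ∀ t ∈ Set.Icc (0 : ℝ) T, Set.uIcc t T ⊆ Set.Icc 0 T := by
    intro t ht
    rw [Set.uIcc_of_le ht.2]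
    exact Set.Icc_subset_Icc ht.1 le_rfl
  have hD : ∀ t ∈ Set.Icc (0 : ℝ) T, D t = ∫ s in t..T, G s := by
    intro t ht
    have h1 : IntervalIntegrable (fun s => h * C s - (r s + h) * KC s) volume t T :=
      (((continuousOn_const.mul hCc).sub ((hr.add continuousOn_const).mul hKCc)).mono
        (hsub t ht)).intervalIntegrable
    have h2 : IntervalIntegrable
        (fun s => h * max (ES s) (KVA s) - (r s + h) * KVA s) volume t T :=
      (((continuousOn_const.mul (hES.sup hKVAc)).sub
        ((hr.add continuousOn_const).mul hKVAc)).mono (hsub t ht)).intervalIntegrable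
    simp only [hDdef, hKC t ht, hKVA t ht, hGdef]
    rw [intervalIntegral.integral_sub h1 h2]
  -- key pointwise inequality on the region where D ≤ 0
  have hkey : ∀ s ∈ Set.Icc (0 : ℝ) T, D s ≤ 0 → -G s ≤ r s * D s := by
    intro s hs hDs
    have hadm' := hadm s hs
    have h1 : ES s ≤ C s := le_trans (le_max_left _ _) hadm'
    have h2 : KC s ≤ C s := le_trans (le_max_right _ _) hadm'
    have h3 : KC s ≤ KVA s := by simpa [hDdef, sub_nonpos] using hDs
    have h4 : C s - max (ES s) (KVA s) + KVA s - KC s ≥ 0 := by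
      rcases max_cases (ES s) (KVA s) with ⟨he, _⟩ | ⟨he, _⟩ <;> rw [he] <;> linarith
    have : 0 ≤ h * (C s - max (ES s) (KVA s) + KVA s - KC s) := mul_nonneg hh h4
    simp only [hGdef, hDdef]
    nlinarith [this]
  -- main claim: KVA ≤ KC on [0, T]
  have main : ∀ t ∈ Set.Icc (0 : ℝ) T, KVA t ≤ KC t := by
    intro t ht
    by_contra hneg
    push_neg at hneg
    have hDt : D t < 0 := by simp [hDdef]; linarith
    -- the first time ≥ t at which D becomes ≥ 0
    set S : Set ℝ := {s | s ∈ Set.Icc t T ∧ 0 ≤ D s} with hSdef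
    have hDT : D T = 0 := by
      have := hD T ⟨le_of_lt hT, le_rfl⟩
      simpa using this
    have hTS : T ∈ S := ⟨⟨ht.2, le_rfl⟩, le_of_eq hDT.symm⟩
    have hSne : S.Nonempty := ⟨T, hTS⟩
    have hSbdd : BddBelow S := ⟨t, fun s hs => hs.1.1⟩
    have hSclosed : IsClosed S := by
      have : S = Set.Icc t T ∩ D ⁻¹' Set.Ici 0 := by
        ext s; simp [hSdef, Set.mem_Icc, and_comm]
      rw [this]
      exact ContinuousOn.preimage_isClosed_of_isClosed
        (hDc.mono (Set.Icc_subset_Icc ht.1 le_rfl)) isClosed_Icc isClosed_Ici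
    set t1 : ℝ := sInf S with ht1def
    have ht1S : t1 ∈ S := hSclosed.csInf_mem hSne hSbdd
    have ht1ge : t ≤ t1 := le_csInf hSne fun s hs => hs.1.1
    have ht1le : t1 ≤ T := ht1S.1.2
    have hDneg : ∀ s, t ≤ s → s < t1 → D s < 0 := by
      intro s hts hst1
      by_contra hge
      push_neg at hge
      exact absurd (csInf_le hSbdd ⟨⟨hts, le_trans (le_of_lt hst1) ht1le⟩, hge⟩)
        (not_le.mpr hst1)
    have htlt : t < t1 := lt_of_le_of_ne ht1ge (by
      intro heq
      exact absurd ht1S.2 (not_le.mpr (heq ▸ hDt)))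
    -- the integrating factor
    set R : ℝ → ℝ := fun s => ∫ u in (0:ℝ)..s, r u with hRdef
    set v : ℝ → ℝ := fun s => D s * Real.exp (-R s) with hvdef
    have hRc : ContinuousOn R (Set.Icc 0 T) := by
      have hint : IntegrableOn r (Set.uIcc 0 T) volume := by
        rw [Set.uIcc_of_le (le_of_lt hT)]
        exact hr.integrableOn_Icc
      have := continuousOn_primitive_interval (f := r) (μ := volume) hint
      rwa [Set.uIcc_of_le (le_of_lt hT)] at this
    have hvc : ContinuousOn v (Set.Icc t t1) := by
      have hsub' : Set.Icc t t1 ⊆ Set.Icc 0 T := Set.Icc_subset_Icc ht.1 ht1le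
      exact ((hDc.mono hsub').mul (((hRc.mono hsub').neg).rexp))
    -- derivative of v on the interior
    have hderiv : ∀ x ∈ Set.Ioo t t1, HasDerivAt v
        ((-G x) * Real.exp (-R x) + D x * (Real.exp (-R x) * -(r x))) x := by
      intro x hx
      have hx' : x ∈ Set.Ioo 0 T := ⟨lt_of_le_of_lt ht.1 hx.1, lt_of_lt_of_le hx.2 ht1le⟩
      have hxI : x ∈ Set.Icc 0 T := ⟨le_of_lt hx'.1, le_of_lt hx'.2⟩
      have hmemnhds : Set.Icc 0 T ∈ nhds x := Icc_mem_nhds hx'.1 hx'.2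
      have hGx : ContinuousAt G x := hGc.continuousAt hmemnhds
      have hrx : ContinuousAt r x := hr.continuousAt hmemnhds
      have hGmeas : StronglyMeasurableAtFilter G (nhds x) volume :=
        (hGc.mono Set.Ioo_subset_Icc_self).stronglyMeasurableAtFilter isOpen_Ioo x hx'
      have hrmeas : StronglyMeasurableAtFilter r (nhds x) volume :=
        (hr.mono Set.Ioo_subset_Icc_self).stronglyMeasurableAtFilter isOpen_Ioo x hx'
      have hGint : IntervalIntegrable G volume x T :=
        (hGc.mono (hsub x hxI)).intervalIntegrable
      have hrint : IntervalIntegrable r volume 0 x := by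
        apply ContinuousOn.intervalIntegrable
        apply hr.mono
        rw [Set.uIcc_of_le (le_of_lt hx'.1)]
        exact Set.Icc_subset_Icc le_rfl (le_of_lt hx'.2)
      have hDd : HasDerivAt D (-G x) x := by
        have h1 : HasDerivAt (fun u => ∫ s in u..T, G s) (-G x) x :=
          intervalIntegral.integral_hasDerivAt_left hGint hGmeas hGx
        apply h1.congr_of_eventuallyEq
        filter_upwards [hmemnhds] with s hs
        exact hD s hs
      have hRd : HasDerivAt R (r x) x :=
        intervalIntegral.integral_hasDerivAt_right hrint hrmeas hrx
      have hed : HasDerivAt (fun s => Real.exp (-R s)) (Real.exp (-R x) * -(r x)) x :=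
        (hRd.neg).exp
      exact hDd.mul hed
    have hanti : AntitoneOn v (Set.Icc t t1) := by
      apply antitoneOn_of_deriv_nonpos (convex_Icc t t1) hvc
      · intro x hx
        rw [interior_Icc] at hx
        exact ((hderiv x hx).differentiableAt).differentiableWithinAt
      · intro x hx
        rw [interior_Icc] at hx
        rw [(hderiv x hx).deriv]
        have hx' : x ∈ Set.Icc 0 T :=
          ⟨le_trans ht.1 (le_of_lt hx.1), le_trans (le_of_lt hx.2) ht1le⟩
        have hDx : D x < 0 := hDneg x (le_of_lt hx.1) hx.2
        have hkx : -G x ≤ r x * D x := hkey x hx' (le_of_lt hDx)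
        have hexp : 0 < Real.exp (-R x) := Real.exp_pos _
        nlinarith [hexp, hkx]
    have h1 : v t1 ≤ v t := hanti (Set.left_mem_Icc.mpr (le_of_lt htlt))
      (Set.right_mem_Icc.mpr (le_of_lt htlt)) (le_of_lt htlt)
    have h2 : 0 ≤ v t1 := mul_nonneg ht1S.2 (le_of_lt (Real.exp_pos _))
    have h3 : v t < 0 := mul_neg_of_neg_of_pos hDt (Real.exp_pos _)
    linarith
  intro t ht
  refine ⟨main t ht, ?_⟩
  exact le_trans (max_le_max le_rfl (main t ht)) (hadm t ht)
end

section
/- Deterministic KVA theorem, part (iii): if ES(t) ≥ 0 for all t, then the solution KVA^h of the nonlinear KVA equation with hurdle rate parameter h is pointwise nondecreasing in h ≥ 0: for 0 ≤ h₁ ≤ h₂, KVA^{h₁}(t) ≤ KVA^{h₂}(t) for all t ∈ [0,T]. -/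
/-- Deterministic KVA theorem, part (iii): if `ES ≥ 0`, the KVA is pointwise
nondecreasing in the hurdle rate `h`. -/
theorem kva_monotone_in_hurdle (T : ℝ) (hT : 0 < T) (r ES : ℝ → ℝ)
    (hr : ContinuousOn r (Set.Icc 0 T)) (hES : ContinuousOn ES (Set.Icc 0 T))
    (hESpos : ∀ t ∈ Set.Icc (0 : ℝ) T, 0 ≤ ES t)
    (h₁ h₂ : ℝ) (hh₁ : 0 ≤ h₁) (hh : h₁ ≤ h₂)
    (K₁ K₂ : ℝ → ℝ)
    (hK₁c : ContinuousOn K₁ (Set.Icc 0 T)) (hK₂c : ContinuousOn K₂ (Set.Icc 0 T))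
    (hK₁ : ∀ t ∈ Set.Icc (0 : ℝ) T,
      K₁ t = ∫ s in t..T, (h₁ * max (ES s) (K₁ s) - (r s + h₁) * K₁ s))
    (hK₂ : ∀ t ∈ Set.Icc (0 : ℝ) T,
      K₂ t = ∫ s in t..T, (h₂ * max (ES s) (K₂ s) - (r s + h₂) * K₂ s)) :
    ∀ t ∈ Set.Icc (0 : ℝ) T, K₁ t ≤ K₂ t := by
  have hTmem : T ∈ Set.Icc (0 : ℝ) T := ⟨hT.le, le_refl T⟩
  -- bound on r
  obtain ⟨R, hR⟩ : ∃ R, ∀ s ∈ Set.Icc (0:ℝ) T, |r s| ≤ R := by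
    obtain ⟨R, hR⟩ := isCompact_Icc.exists_bound_of_continuousOn hr
    exact ⟨R, fun s hs => hR s hs⟩
  have hR0 : 0 ≤ R := le_trans (abs_nonneg _) (hR 0 ⟨le_refl _, hT.le⟩)
  have hh₂ : 0 ≤ h₂ := hh₁.trans hh
  set L : ℝ := 2 * h₂ + R with hLdef
  have hL0 : 0 ≤ L := by positivity
  set f₁ : ℝ → ℝ := fun s => h₁ * max (ES s) (K₁ s) - (r s + h₁) * K₁ s with hf₁def
  set f₂ : ℝ → ℝ := fun s => h₂ * max (ES s) (K₂ s) - (r s + h₂) * K₂ s with hf₂def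
  have hf₁c : ContinuousOn f₁ (Set.Icc 0 T) :=
    (continuousOn_const.mul (hES.sup hK₁c)).sub ((hr.add continuousOn_const).mul hK₁c)
  have hf₂c : ContinuousOn f₂ (Set.Icc 0 T) :=
    (continuousOn_const.mul (hES.sup hK₂c)).sub ((hr.add continuousOn_const).mul hK₂c)
  have hInt : ∀ g : ℝ → ℝ, ContinuousOn g (Set.Icc 0 T) → ∀ a ∈ Set.Icc (0:ℝ) T,
      ∀ b ∈ Set.Icc (0:ℝ) T, IntervalIntegrable g MeasureTheory.volume a b := by
    intro g hg a ha b hb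
    exact (hg.mono (Set.uIcc_subset_Icc ha hb)).intervalIntegrable
  -- difference identity
  have hdiff : ∀ a ∈ Set.Icc (0:ℝ) T, ∀ b ∈ Set.Icc (0:ℝ) T,
      (K₁ a - K₂ a) - (K₁ b - K₂ b) = ∫ s in a..b, (f₁ s - f₂ s) := by
    intro a ha b hb
    have e₁ : K₁ a - K₁ b = ∫ s in a..b, f₁ s := by
      rw [hK₁ a ha, hK₁ b hb,
        ← intervalIntegral.integral_add_adjacent_intervals
          (hInt f₁ hf₁c a ha b hb) (hInt f₁ hf₁c b hb T hTmem)]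
      ring
    have e₂ : K₂ a - K₂ b = ∫ s in a..b, f₂ s := by
      rw [hK₂ a ha, hK₂ b hb,
        ← intervalIntegral.integral_add_adjacent_intervals
          (hInt f₂ hf₂c a ha b hb) (hInt f₂ hf₂c b hb T hTmem)]
      ring
    rw [intervalIntegral.integral_sub (hInt f₁ hf₁c a ha b hb) (hInt f₂ hf₂c a ha b hb),
      ← e₁, ← e₂]
    ring
  -- pointwise comparison of the drivers where K₂ ≤ K₁
  have key_ptwise : ∀ s ∈ Set.Icc (0:ℝ) T, K₂ s ≤ K₁ s →
      f₁ s - f₂ s ≤ L * (K₁ s - K₂ s) := by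
    intro s hs hu
    have h1 : (h₁ - h₂) * (max (ES s) (K₁ s) - K₁ s) ≤ 0 :=
      mul_nonpos_of_nonpos_of_nonneg (by linarith) (by simp [le_max_right])
    have h2 : max (ES s) (K₁ s) - max (ES s) (K₂ s) ≤ K₁ s - K₂ s := by
      have : max (ES s) (K₁ s) ≤ max (ES s) (K₂ s) + (K₁ s - K₂ s) := by
        apply max_le
        · linarith [le_max_left (ES s) (K₂ s)]
        · linarith [le_max_right (ES s) (K₂ s)]
      linarith
    have h3 : -(r s + h₂) ≤ R + h₂ := by
      have := (abs_le.1 (hR s hs)).1; linarith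
    have expand : f₁ s - f₂ s = (h₁ - h₂) * (max (ES s) (K₁ s) - K₁ s)
        + h₂ * (max (ES s) (K₁ s) - max (ES s) (K₂ s))
        + (-(r s + h₂)) * (K₁ s - K₂ s) := by
      simp only [hf₁def, hf₂def]; ring
    have hb2 : h₂ * (max (ES s) (K₁ s) - max (ES s) (K₂ s)) ≤ h₂ * (K₁ s - K₂ s) :=
      mul_le_mul_of_nonneg_left h2 hh₂
    have hb3 : (-(r s + h₂)) * (K₁ s - K₂ s) ≤ (R + h₂) * (K₁ s - K₂ s) :=
      mul_le_mul_of_nonneg_right h3 (by linarith)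
    rw [expand, hLdef]
    nlinarith
  -- main contradiction argument
  by_contra hcon
  push_neg at hcon
  obtain ⟨t₀, ht₀, hu₀⟩ := hcon
  have hsub₀ : Set.Icc t₀ T ⊆ Set.Icc (0:ℝ) T := Set.Icc_subset_Icc ht₀.1 le_rfl
  set S : Set ℝ := {s ∈ Set.Icc t₀ T | K₁ s ≤ K₂ s} with hSdef
  have hK₁T : K₁ T = 0 := by simpa using hK₁ T hTmem
  have hK₂T : K₂ T = 0 := by simpa using hK₂ T hTmem
  have hTS : T ∈ S := ⟨⟨ht₀.2, le_refl T⟩, by rw [hK₁T, hK₂T]⟩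
  have hSclosed : IsClosed S := by
    have : S = Set.Icc t₀ T ∩ (fun s => K₁ s - K₂ s) ⁻¹' Set.Iic 0 := by
      ext s; simp [hSdef, Set.mem_Iic, sub_nonpos, and_comm]
    rw [this]
    exact ContinuousOn.preimage_isClosed_of_isClosed
      ((hK₁c.sub hK₂c).mono hsub₀) isClosed_Icc isClosed_Iic
  have hSbdd : BddBelow S := ⟨t₀, fun s hs => hs.1.1⟩
  set s₁ : ℝ := sInf S with hs₁def
  have hs₁S : s₁ ∈ S := hSclosed.csInf_mem ⟨T, hTS⟩ hSbdd
  have hs₁Icc : s₁ ∈ Set.Icc (0:ℝ) T := hsub₀ hs₁S.1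
  have ht₀s₁ : t₀ < s₁ := by
    rcases lt_or_eq_of_le hs₁S.1.1 with h | h
    · exact h
    · exact absurd hs₁S.2 (by rw [← h]; exact not_le.2 hu₀)
  have hpos : ∀ t ∈ Set.Ico t₀ s₁, K₂ t < K₁ t := by
    intro t ht
    by_contra hc
    push_neg at hc
    exact absurd (csInf_le hSbdd ⟨⟨ht.1, ht.2.le.trans hs₁S.1.2⟩, hc⟩) (not_le.2 ht.2)
  -- K₁ s₁ = K₂ s₁
  have hs₁eq : K₁ s₁ = K₂ s₁ := by
    refine le_antisymm hs₁S.2 ?_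
    have hne : (nhdsWithin s₁ (Set.Ico t₀ s₁)).NeBot := by
      rw [← mem_closure_iff_nhdsWithin_neBot, closure_Ico (ne_of_lt ht₀s₁)]
      exact ⟨ht₀s₁.le, le_refl s₁⟩
    have hcw : ContinuousWithinAt (fun s => K₁ s - K₂ s) (Set.Ico t₀ s₁) s₁ :=
      (((hK₁c.sub hK₂c) s₁ hs₁Icc).mono
        (fun x hx => ⟨ht₀.1.trans hx.1, hx.2.le.trans hs₁Icc.2⟩))
    have h0 : (0:ℝ) ≤ K₁ s₁ - K₂ s₁ := by
      refine ge_of_tendsto hcw ?_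
      filter_upwards [self_mem_nhdsWithin] with x hx
      linarith [hpos x hx]
    linarith
  have huIcc : ∀ t ∈ Set.Icc t₀ s₁, K₂ t ≤ K₁ t := by
    intro t ht
    rcases lt_or_eq_of_le ht.2 with h | h
    · exact (hpos t ⟨ht.1, h⟩).le
    · rw [h, hs₁eq]
  have hsubIcc : Set.Icc t₀ s₁ ⊆ Set.Icc (0:ℝ) T :=
    Set.Icc_subset_Icc ht₀.1 hs₁Icc.2
  -- key integral inequality
  have key : ∀ t ∈ Set.Icc t₀ s₁, K₁ t - K₂ t ≤ ∫ s in t..s₁, L * (K₁ s - K₂ s) := by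
    intro t ht
    have htmem : t ∈ Set.Icc (0:ℝ) T := hsubIcc ht
    have e := hdiff t htmem s₁ hs₁Icc
    rw [hs₁eq, sub_self, sub_zero] at e
    rw [e]
    have hI₁ : IntervalIntegrable (fun s => f₁ s - f₂ s) MeasureTheory.volume t s₁ :=
      hInt _ (hf₁c.sub hf₂c) t htmem s₁ hs₁Icc
    have hI₂ : IntervalIntegrable (fun s => L * (K₁ s - K₂ s)) MeasureTheory.volume t s₁ :=
      hInt _ (continuousOn_const.mul (hK₁c.sub hK₂c)) t htmem s₁ hs₁Icc
    refine intervalIntegral.integral_mono_on ht.2 hI₁ hI₂ ?_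
    intro s hs
    have hsIcc : s ∈ Set.Icc t₀ s₁ := ⟨ht.1.trans hs.1, hs.2⟩
    exact key_ptwise s (hsubIcc hsIcc) (huIcc s hsIcc)
  -- maximum of the difference on [t₀, s₁]
  obtain ⟨c, hcmem, hcmax⟩ :=
    isCompact_Icc.exists_isMaxOn (Set.nonempty_Icc.2 ht₀s₁.le)
      ((hK₁c.sub hK₂c).mono hsubIcc)
  set M : ℝ := K₁ c - K₂ c with hMdef
  have hM : 0 < M := lt_of_lt_of_le (sub_pos.2 hu₀) (hcmax ⟨le_refl t₀, ht₀s₁.le⟩)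
  -- Gronwall iteration
  have bound : ∀ n : ℕ, ∀ t ∈ Set.Icc t₀ s₁,
      K₁ t - K₂ t ≤ M * (L * (s₁ - t)) ^ n / ((Nat.factorial n : ℕ) : ℝ) := by
    intro n
    induction n with
    | zero => intro t ht; simpa using hcmax ht
    | succ n ih =>
      intro t ht
      have htmem : t ∈ Set.Icc (0:ℝ) T := hsubIcc ht
      have hI₂ : IntervalIntegrable (fun s => L * (K₁ s - K₂ s)) MeasureTheory.volume t s₁ :=
        hInt _ (continuousOn_const.mul (hK₁c.sub hK₂c)) t htmem s₁ hs₁Icc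
      have hI₃ : IntervalIntegrable (fun s => L * (M * (L * (s₁ - s)) ^ n / ((Nat.factorial n : ℕ) : ℝ)))
          MeasureTheory.volume t s₁ := by
        apply Continuous.intervalIntegrable
        fun_prop
      have step1 : K₁ t - K₂ t ≤ ∫ s in t..s₁, L * (M * (L * (s₁ - s)) ^ n / ((Nat.factorial n : ℕ) : ℝ)) := by
        refine (key t ht).trans (intervalIntegral.integral_mono_on ht.2 hI₂ hI₃ ?_)
        intro s hs
        have hsIcc : s ∈ Set.Icc t₀ s₁ := ⟨ht.1.trans hs.1, hs.2⟩
        exact mul_le_mul_of_nonneg_left (ih s hsIcc) hL0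
      have eq1 : (fun s => L * (M * (L * (s₁ - s)) ^ n / ((Nat.factorial n : ℕ) : ℝ)))
          = fun s => (L ^ (n + 1) * M / ((Nat.factorial n : ℕ) : ℝ)) * (s₁ - s) ^ n := by
        funext s; rw [mul_pow]; ring
      have eq2 : (∫ s in t..s₁, (s₁ - s) ^ n) = (s₁ - t) ^ (n + 1) / (n + 1) := by
        rw [show (fun s => (s₁ - s) ^ n) = fun s => (fun x => x ^ n) (s₁ - s) from rfl,
          intervalIntegral.integral_comp_sub_left (fun x => x ^ n) s₁]
        simp [integral_pow]
      have hnfac : (((Nat.factorial n : ℕ) : ℝ)) ≠ 0 := by positivity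
      calc K₁ t - K₂ t ≤ ∫ s in t..s₁, L * (M * (L * (s₁ - s)) ^ n / ((Nat.factorial n : ℕ) : ℝ)) := step1
        _ = (L ^ (n + 1) * M / ((Nat.factorial n : ℕ) : ℝ)) * ∫ s in t..s₁, (s₁ - s) ^ n := by
            rw [eq1, intervalIntegral.integral_const_mul]
        _ = M * (L * (s₁ - t)) ^ (n + 1) / ((Nat.factorial (n+1) : ℕ) : ℝ) := by
            rw [eq2, mul_pow]
            push_cast [Nat.factorial_succ]
            field_simp
  have hlim : Filter.Tendsto (fun n : ℕ => M * (L * (s₁ - t₀)) ^ n / ((Nat.factorial n : ℕ) : ℝ))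
      Filter.atTop (nhds 0) := by
    have h := (FloorSemiring.tendsto_pow_div_factorial_atTop (L * (s₁ - t₀))).const_mul M
    simpa [mul_div_assoc] using h
  have hfinal : K₁ t₀ - K₂ t₀ ≤ 0 :=
    ge_of_tendsto hlim (Filter.Eventually.of_forall fun n =>
      bound n t₀ ⟨le_refl t₀, ht₀s₁.le⟩)
  linarith
end

section
/- Monotonicity of FVA in the capital funding source: in the deterministic setting, if g₁(s) ≤ g₂(s) for all s (e.g. g_i(s) = Σ P(s) − EC_i(s) − UCVA(s) − MVA(s) with EC₁ ≥ EC₂), then the corresponding solutions of F_i(t) = ∫_t^T λ(s)·(g_i(s) − F_i(s))⁺ ds satisfy F₁(t) ≤ F₂(t) for all t ∈ [0,T]. That is, higher economic capital yields lower FVA. -/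
open Topology Filter


/-- Monotonicity of the FVA in the funding-need term `g`: higher economic capital
(smaller `g`) yields a lower FVA. -/
theorem fva_monotone_in_funding (T : ℝ) (hT : 0 < T) (lam g₁ g₂ : ℝ → ℝ)
    (hlamc : ContinuousOn lam (Set.Icc 0 T))
    (hg₁c : ContinuousOn g₁ (Set.Icc 0 T)) (hg₂c : ContinuousOn g₂ (Set.Icc 0 T))
    (hlam : ∀ t ∈ Set.Icc (0 : ℝ) T, 0 ≤ lam t)
    (hg : ∀ t ∈ Set.Icc (0 : ℝ) T, g₁ t ≤ g₂ t)
    (F₁ F₂ : ℝ → ℝ)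
    (hF₁c : ContinuousOn F₁ (Set.Icc 0 T)) (hF₂c : ContinuousOn F₂ (Set.Icc 0 T))
    (hF₁ : ∀ t ∈ Set.Icc (0 : ℝ) T, F₁ t = ∫ s in t..T, lam s * max (g₁ s - F₁ s) 0)
    (hF₂ : ∀ t ∈ Set.Icc (0 : ℝ) T, F₂ t = ∫ s in t..T, lam s * max (g₂ s - F₂ s) 0) :
    ∀ t ∈ Set.Icc (0 : ℝ) T, F₁ t ≤ F₂ t := by
  by_contra hcon
  push_neg at hcon
  obtain ⟨t₀, ht₀, hlt⟩ := hcon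
  set h₁ : ℝ → ℝ := fun s => lam s * max (g₁ s - F₁ s) 0 with hh₁def
  set h₂ : ℝ → ℝ := fun s => lam s * max (g₂ s - F₂ s) 0 with hh₂def
  have hh₁c : ContinuousOn h₁ (Set.Icc 0 T) :=
    hlamc.mul ((hg₁c.sub hF₁c).sup continuousOn_const)
  have hh₂c : ContinuousOn h₂ (Set.Icc 0 T) :=
    hlamc.mul ((hg₂c.sub hF₂c).sup continuousOn_const)
  have hTmem : T ∈ Set.Icc (0:ℝ) T := ⟨hT.le, le_refl T⟩
  have hFT₁ : F₁ T = 0 := by rw [hF₁ T hTmem, intervalIntegral.integral_same]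
  have hFT₂ : F₂ T = 0 := by rw [hF₂ T hTmem, intervalIntegral.integral_same]
  set S : Set ℝ := Set.Icc t₀ T ∩ {x | F₁ x - F₂ x ≤ 0} with hSdef
  have hTS : T ∈ S := ⟨⟨ht₀.2, le_refl T⟩, by simp [hFT₁, hFT₂]⟩
  have hsub0 : Set.Icc t₀ T ⊆ Set.Icc (0:ℝ) T := Set.Icc_subset_Icc ht₀.1 le_rfl
  have hSc : IsClosed S := by
    have : S = Set.Icc t₀ T ∩ (fun x => F₁ x - F₂ x) ⁻¹' Set.Iic 0 := by
      ext x; simp [hSdef, Set.mem_preimage]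
    rw [this]
    exact ContinuousOn.preimage_isClosed_of_isClosed
      ((hF₁c.sub hF₂c).mono hsub0) isClosed_Icc isClosed_Iic
  have hSne : S.Nonempty := ⟨T, hTS⟩
  have hSbdd : BddBelow S := ⟨t₀, fun x hx => hx.1.1⟩
  set t₁ := sInf S with ht₁def
  have ht₁S : t₁ ∈ S := hSc.csInf_mem hSne hSbdd
  have ht₀nS : t₀ ∉ S := fun h => absurd h.2 (by simp; linarith)
  have ht₀t₁ : t₀ < t₁ := lt_of_le_of_ne ht₁S.1.1 (fun h => ht₀nS (h ▸ ht₁S))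
  have ht₁mem : t₁ ∈ Set.Icc (0:ℝ) T := ⟨le_trans ht₀.1 ht₁S.1.1, ht₁S.1.2⟩
  -- F₂ < F₁ on [t₀, t₁)
  have hpos : ∀ s ∈ Set.Ico t₀ t₁, F₂ s < F₁ s := by
    intro s hs
    by_contra hns
    push_neg at hns
    have : s ∈ S := ⟨⟨hs.1, le_trans hs.2.le ht₁S.1.2⟩, by simp; linarith⟩
    exact absurd (csInf_le hSbdd this) (not_le.mpr hs.2)
  -- F₂ ≤ F₁ on [t₀, t₁] by continuity at t₁
  have hge : ∀ s ∈ Set.Icc t₀ t₁, F₂ s ≤ F₁ s := by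
    intro s hs
    rcases lt_or_eq_of_le hs.2 with h | h
    · exact (hpos s ⟨hs.1, h⟩).le
    · subst h
      have hne : (𝓝[Set.Ico t₀ t₁] t₁).NeBot := by
        rw [← mem_closure_iff_nhdsWithin_neBot, closure_Ico (ne_of_lt ht₀t₁)]
        exact ⟨ht₀t₁.le, le_rfl⟩
      have hsubI : Set.Ico t₀ t₁ ⊆ Set.Icc (0:ℝ) T := fun x hx =>
        ⟨le_trans ht₀.1 hx.1, le_trans hx.2.le ht₁mem.2⟩
      have htend : Filter.Tendsto (fun x => F₁ x - F₂ x) (𝓝[Set.Ico t₀ t₁] t₁)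
          (𝓝 (F₁ t₁ - F₂ t₁)) := by
        have := ((hF₁c.sub hF₂c) t₁ ht₁mem).tendsto
        exact this.mono_left (nhdsWithin_mono t₁ hsubI)
      have hev : ∀ᶠ x in 𝓝[Set.Ico t₀ t₁] t₁, 0 ≤ F₁ x - F₂ x := by
        filter_upwards [self_mem_nhdsWithin] with x hx
        linarith [hpos x hx]
      linarith [ge_of_tendsto htend hev]
  -- integrability
  have hu₁ : Set.uIcc t₀ t₁ ⊆ Set.Icc (0:ℝ) T := by
    rw [Set.uIcc_of_le ht₀t₁.le]
    exact fun x hx => ⟨le_trans ht₀.1 hx.1, le_trans hx.2 ht₁mem.2⟩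
  have hu₂ : Set.uIcc t₁ T ⊆ Set.Icc (0:ℝ) T := by
    rw [Set.uIcc_of_le ht₁mem.2]
    exact fun x hx => ⟨le_trans ht₁mem.1 hx.1, hx.2⟩
  have hi₁a : IntervalIntegrable h₁ MeasureTheory.volume t₀ t₁ :=
    (hh₁c.mono hu₁).intervalIntegrable
  have hi₁b : IntervalIntegrable h₁ MeasureTheory.volume t₁ T :=
    (hh₁c.mono hu₂).intervalIntegrable
  have hi₂a : IntervalIntegrable h₂ MeasureTheory.volume t₀ t₁ :=
    (hh₂c.mono hu₁).intervalIntegrable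
  have hi₂b : IntervalIntegrable h₂ MeasureTheory.volume t₁ T :=
    (hh₂c.mono hu₂).intervalIntegrable
  have ht₀mem : t₀ ∈ Set.Icc (0:ℝ) T := ht₀
  have key₁ : ∫ s in t₀..t₁, h₁ s = F₁ t₀ - F₁ t₁ := by
    have hadd := intervalIntegral.integral_add_adjacent_intervals hi₁a hi₁b
    have e₀ := hF₁ t₀ ht₀mem
    have e₁ := hF₁ t₁ ht₁mem
    rw [e₀, e₁, ← hadd]; ring
  have key₂ : ∫ s in t₀..t₁, h₂ s = F₂ t₀ - F₂ t₁ := by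
    have hadd := intervalIntegral.integral_add_adjacent_intervals hi₂a hi₂b
    have e₀ := hF₂ t₀ ht₀mem
    have e₁ := hF₂ t₁ ht₁mem
    rw [e₀, e₁, ← hadd]; ring
  have hmono : ∫ s in t₀..t₁, h₁ s ≤ ∫ s in t₀..t₁, h₂ s := by
    apply intervalIntegral.integral_mono_on ht₀t₁.le hi₁a hi₂a
    intro s hs
    have hsT : s ∈ Set.Icc (0:ℝ) T :=
      ⟨le_trans ht₀.1 hs.1, le_trans hs.2 ht₁mem.2⟩
    have h1 : g₁ s - F₁ s ≤ g₂ s - F₂ s := by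
      have := hg s hsT
      have := hge s hs
      linarith
    exact mul_le_mul_of_nonneg_left (max_le_max h1 le_rfl) (hlam s hsT)
  have ht₁le : F₁ t₁ - F₂ t₁ ≤ 0 := ht₁S.2
  have ht₁ge : F₂ t₁ ≤ F₁ t₁ := hge t₁ ⟨ht₀t₁.le, le_rfl⟩
  rw [key₁, key₂] at hmono
  linarith
end
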